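/- Let b > 0, 0 < ω < 1/2, and φ ∈ ℝ, and consider the exponentially modulated sinusoid s_n = b^n cos(2πωn + φ) for n ≥ 0. Then for every window length L ≥ 2 the L-trajectory space of s has dimension exactly 2; that is, both damped and undamped sinusoids with frequency strictly between 0 and 1/2 have rank 2. -/

import Mathlib

/-!
A damped sinusoid `s n = bⁿ cos (θ n + φ)` satisfies the order-two linear recurrence
`s (n + 2) = 2 b cos θ · s (n + 1) - b² · s n`, so every lagged vector is a combination of the
first two and the trajectory space is spanned by `X₀, X₁`. These two are independent because
their leading `2 × 2` Hankel minor `s₀ s₂ - s₁²` equals `-(b sin θ)²`, which is nonzero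
when `b ≠ 0` and `0 < θ < π`.
-/

open Submodule

section Trajectory

variable {K : Type*} [Field K]

def laggedVector (s : ℕ → K) (L i : ℕ) : Fin L → K := fun l => s (i + l)

def trajectorySpace (s : ℕ → K) (L : ℕ) : Submodule K (Fin L → K) :=
  span K (Set.range (laggedVector s L))

variable {s : ℕ → K} {L : ℕ}

theorem laggedVector_add_two {p q : K} (hrec : ∀ n, s (n + 2) = p * s (n + 1) + q * s n)
    (i : ℕ) :
    laggedVector s L (i + 2) = p • laggedVector s L (i + 1) + q • laggedVector s L i := by
  funext l
  simp only [laggedVector, Pi.add_apply, Pi.smul_apply, smul_eq_mul]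
  rw [show i + 2 + l = i + l + 2 by omega, show i + 1 + l = i + l + 1 by omega, hrec]

theorem laggedVector_mem_span_pair {p q : K} (hrec : ∀ n, s (n + 2) = p * s (n + 1) + q * s n)
    (i : ℕ) : laggedVector s L i ∈ span K {laggedVector s L 0, laggedVector s L 1} := by
  induction i using Nat.twoStepInduction with
  | zero => exact subset_span (by simp)
  | one => exact subset_span (by simp)
  | more i hi hi' =>
    rw [laggedVector_add_two hrec]
    exact add_mem (smul_mem _ _ hi') (smul_mem _ _ hi)

theorem trajectorySpace_eq_span_pair {p q : K}
    (hrec : ∀ n, s (n + 2) = p * s (n + 1) + q * s n) :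
    trajectorySpace s L = span K {laggedVector s L 0, laggedVector s L 1} := by
  refine le_antisymm (span_le.2 ?_) (span_le.2 ?_)
  · rintro _ ⟨i, rfl⟩
    exact laggedVector_mem_span_pair hrec i
  · rintro _ (rfl | rfl) <;> exact subset_span ⟨_, rfl⟩

theorem linearIndependent_laggedVector_zero_one (hL : 2 ≤ L) (hdet : s 0 * s 2 - s 1 ^ 2 ≠ 0) :
    LinearIndependent K ![laggedVector s L 0, laggedVector s L 1] := by
  rw [LinearIndependent.pair_iff]
  intro a c h
  have h₀ : a * s 0 + c * s 1 = 0 := by simpa [laggedVector] using congrFun h ⟨0, by omega⟩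
  have h₁ : a * s 1 + c * s 2 = 0 := by simpa [laggedVector] using congrFun h ⟨1, by omega⟩
  have ha : a * (s 0 * s 2 - s 1 ^ 2) = 0 := by linear_combination s 2 * h₀ - s 1 * h₁
  have hc : c * (s 0 * s 2 - s 1 ^ 2) = 0 := by linear_combination s 0 * h₁ - s 1 * h₀
  exact ⟨(mul_eq_zero.1 ha).resolve_right hdet, (mul_eq_zero.1 hc).resolve_right hdet⟩

theorem finrank_trajectorySpace_eq_two {p q : K}
    (hrec : ∀ n, s (n + 2) = p * s (n + 1) + q * s n) (hL : 2 ≤ L)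
    (hdet : s 0 * s 2 - s 1 ^ 2 ≠ 0) :
    Module.finrank K (trajectorySpace s L) = 2 := by
  rw [trajectorySpace_eq_span_pair hrec, ← Matrix.range_cons_cons_empty,
    finrank_span_eq_card (linearIndependent_laggedVector_zero_one hL hdet), Fintype.card_fin]

end Trajectory

section DampedCosine

variable {s : ℕ → ℝ} {b θ φ : ℝ}

theorem damped_cos_recurrence (hs : ∀ n : ℕ, s n = b ^ n * Real.cos (θ * n + φ)) (n : ℕ) :
    s (n + 2) = 2 * b * Real.cos θ * s (n + 1) + -b ^ 2 * s n := by
  have hsum : Real.cos (θ * (n + 2 : ℕ) + φ) + Real.cos (θ * n + φ)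
      = 2 * Real.cos θ * Real.cos (θ * (n + 1 : ℕ) + φ) := by
    have hnext : θ * (n + 2 : ℕ) + φ = θ * (n + 1 : ℕ) + φ + θ := by push_cast; ring
    have hprev : θ * n + φ = θ * (n + 1 : ℕ) + φ - θ := by push_cast; ring
    rw [hnext, hprev, Real.cos_add, Real.cos_sub]
    ring
  rw [hs, hs, hs]
  linear_combination b ^ (n + 2) * hsum

theorem damped_cos_hankel_minor (hs : ∀ n : ℕ, s n = b ^ n * Real.cos (θ * n + φ)) :
    s 0 * s 2 - s 1 ^ 2 = -(b * Real.sin θ) ^ 2 := by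
  simp only [hs, Nat.cast_ofNat, Nat.cast_one, Nat.cast_zero, mul_zero, zero_add, mul_one,
    pow_zero, one_mul, pow_one]
  rw [Real.cos_add, Real.cos_add, mul_comm θ 2, Real.cos_two_mul, Real.sin_two_mul]
  linear_combination b ^ 2 * (Real.cos φ ^ 2 * Real.sin_sq_add_cos_sq θ
    - Real.sin θ ^ 2 * Real.sin_sq_add_cos_sq φ)

end DampedCosine

/-- For `b > 0`, `0 < ω < 1/2` and any phase `φ`, the exponentially
modulated sinusoid `s n = b^n * cos (2πωn + φ)` has, for every window length
`L ≥ 2`, an `L`-trajectory space of dimension exactly `2`: both damped and undamped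
sinusoids have rank `2`. -/
theorem damped_sinusoid_rank_two
    (b : ℝ) (hb : 0 < b) (ω : ℝ) (hω0 : 0 < ω) (hω : ω < 1 / 2) (φ : ℝ)
    (s : ℕ → ℝ) (hs : ∀ n : ℕ, s n = b ^ n * Real.cos (2 * Real.pi * ω * n + φ))
    (L : ℕ) (hL : 2 ≤ L) :
    Module.finrank ℝ
      ↥(Submodule.span ℝ (Set.range fun i : ℕ => fun l : Fin L => s (i + (l : ℕ)))) = 2 := by
  have hsin : 0 < Real.sin (2 * Real.pi * ω) :=
    Real.sin_pos_of_pos_of_lt_pi (by positivity) (by nlinarith [Real.pi_pos])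
  have hdet : s 0 * s 2 - s 1 ^ 2 ≠ 0 := by
    rw [damped_cos_hankel_minor hs]
    exact neg_ne_zero.2 (pow_ne_zero 2 (mul_pos hb hsin).ne')
  exact finrank_trajectorySpace_eq_two (damped_cos_recurrence hs) hL hdet
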